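/- For the d-dimensional Werner-Holevo channel W_d(ρ) = (I tr ρ − ρ^T)/(d−1), the pair ρ_A = I_A/d and V_AB = (I_AB/(d+2) − 2Φ_d/(d(d+2)))^{T_B} is a feasible solution to the PPT-preserving fidelity SDP with k = (d+2)/d achieving fidelity 1; in particular tr(J_{W_d} V_AB) = 1, 0 ≤ V_AB ≤ ρ_A ⊗ I_B, and −(d/(d+2)) ρ_A ⊗ I_B ≤ V_AB^{T_B} ≤ (d/(d+2)) ρ_A ⊗ I_B. -/

import Mathlib

open Matrix
open scoped Kronecker ComplexOrder

/-- Loewner order: `Loe M N` means `M ≤ N`. -/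
def Loe {n : Type*} [Fintype n] (M N : Matrix n n ℂ) : Prop := (N - M).PosSemidef

/-- Partial transpose on the second tensor factor. -/
def PTb {A B : Type*} (M : Matrix (A × B) (A × B) ℂ) : Matrix (A × B) (A × B) ℂ :=
  fun p q => M (p.1, q.2) (q.1, p.2)

/-- The unnormalized maximally entangled projector `Φ_d`. -/
def Phi (d : ℕ) : Matrix (Fin d × Fin d) (Fin d × Fin d) ℂ :=
  fun p q => if p.1 = p.2 ∧ q.1 = q.2 then 1 else 0

/-!
`S = Φ_d^{T_B}` is the swap operator, an involution, and `Φ_d² = d Φ_d`. Hence `a • 1 + b • S` has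
eigenvalues `a ± b` and `a • 1 + b • Φ_d` has eigenvalues `a` and `a + d b`, so each of the four
Loewner conditions is a sign check on two scalars. For the fidelity, `(1 - S)(a • 1 - b • S)` equals
`(a + b)(1 - S)`, whose trace `(a + b)(d² - d)` gives `tr(J V) = (a + b) d = 1`.
-/

namespace Matrix

section Spectral

variable {n 𝕜 : Type*} [Fintype n] [RCLike 𝕜]

theorem posSemidef_of_isHermitian_of_mul_self_eq_smul {M : Matrix n n 𝕜} (hM : M.IsHermitian)
    {c : ℝ} (hc : 0 < c) (hMM : M * M = c • M) : M.PosSemidef := by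
  have hM_eq : M = c⁻¹ • (Mᴴ * M) := by
    rw [hM.eq, hMM, smul_smul, inv_mul_cancel₀ hc.ne', one_smul]
  rw [hM_eq]
  exact (posSemidef_conjTranspose_mul_self M).smul (inv_nonneg.mpr hc.le)

variable [DecidableEq n]

/-- `M * M = c • M` confines the spectrum of `M` to `{0, c}`, so `x • 1 + y • M` has eigenvalues
among `x` and `x + c * y`. -/
theorem posSemidef_smul_one_add_smul_of_mul_self_eq_smul {M : Matrix n n 𝕜}
    (hM : M.IsHermitian) {c : ℝ} (hc : 0 < c) (hMM : M * M = c • M) {x y : ℝ} (hx : 0 ≤ x)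
    (hxy : 0 ≤ x + c * y) : (x • 1 + y • M : Matrix n n 𝕜).PosSemidef := by
  have hcompl : (c • 1 - M) * (c • 1 - M) = c • (c • 1 - M) := by
    simp only [sub_mul, mul_sub, smul_mul_assoc, mul_smul_comm, one_mul, mul_one, hMM]
    module
  have hcompl_herm : (c • 1 - M).IsHermitian := (PosSemidef.one.smul hc.le).isHermitian.sub hM
  have hdecomp : x • 1 + y • M = (x / c) • (c • 1 - M) + ((x + c * y) / c) • M := by
    match_scalars
    · field_simp
    · field_simp
      ring
  rw [hdecomp]
  exact ((posSemidef_of_isHermitian_of_mul_self_eq_smul hcompl_herm hc hcompl).smul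
    (by positivity)).add ((posSemidef_of_isHermitian_of_mul_self_eq_smul hM hc hMM).smul
    (by positivity))

theorem posSemidef_smul_one_add_smul_of_mul_self_eq_one {S : Matrix n n 𝕜} (hS : S.IsHermitian)
    (hSS : S * S = 1) {x y : ℝ} (hxy : |y| ≤ x) : (x • 1 + y • S : Matrix n n 𝕜).PosSemidef := by
  have hsq : (1 + S) * (1 + S) = (2 : ℝ) • (1 + S) := by
    simp only [add_mul, mul_add, one_mul, mul_one, hSS]
    module
  obtain ⟨hyx, hyx'⟩ := abs_le.mp hxy
  have hdecomp : x • 1 + y • S = (x - y) • 1 + y • (1 + S) := by module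
  rw [hdecomp]
  exact posSemidef_smul_one_add_smul_of_mul_self_eq_smul (isHermitian_one.add hS) two_pos hsq
    (by linarith) (by linarith)

end Spectral

section Permutation

variable {n R : Type*} [DecidableEq n] {σ : Equiv.Perm n}

theorem isHermitian_permMatrix_of_mul_self_eq_one [NonAssocSemiring R] [StarRing R]
    (hσ : σ * σ = 1) : (σ.permMatrix R).IsHermitian := by
  rw [IsHermitian, conjTranspose_permMatrix, inv_eq_of_mul_eq_one_right hσ]

theorem permMatrix_mul_self_of_mul_self_eq_one [Fintype n] [NonAssocSemiring R]
    (hσ : σ * σ = 1) : σ.permMatrix R * σ.permMatrix R = 1 := by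
  rw [← permMatrix_mul, hσ, permMatrix_one]

end Permutation

end Matrix

section PartialTranspose

variable {A B : Type*}

@[simp] theorem PTb_PTb (M : Matrix (A × B) (A × B) ℂ) : PTb (PTb M) = M := rfl

@[simp] theorem PTb_sub (M N : Matrix (A × B) (A × B) ℂ) : PTb (M - N) = PTb M - PTb N := rfl

@[simp] theorem PTb_smul (c : ℂ) (M : Matrix (A × B) (A × B) ℂ) : PTb (c • M) = c • PTb M := rfl

@[simp] theorem PTb_one [DecidableEq A] [DecidableEq B] :
    PTb (1 : Matrix (A × B) (A × B) ℂ) = 1 := by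
  ext p q
  simp only [PTb, one_apply, Prod.ext_iff]
  grind

end PartialTranspose

section Swap

variable (n : Type*)

theorem Equiv.prodComm_mul_self : (Equiv.prodComm n n : Equiv.Perm (n × n)) * Equiv.prodComm n n = 1 :=
  Equiv.ext fun _ => rfl

variable [DecidableEq n]

abbrev swapMatrix : Matrix (n × n) (n × n) ℂ := Equiv.Perm.permMatrix ℂ (Equiv.prodComm n n)

theorem isHermitian_swapMatrix : (swapMatrix n).IsHermitian :=
  isHermitian_permMatrix_of_mul_self_eq_one (Equiv.prodComm_mul_self n)

theorem swapMatrix_mul_self [Fintype n] : swapMatrix n * swapMatrix n = 1 :=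
  permMatrix_mul_self_of_mul_self_eq_one (Equiv.prodComm_mul_self n)

theorem trace_swapMatrix [Fintype n] : (swapMatrix n).trace = Fintype.card n := by
  rw [trace, Fintype.sum_prod_type]
  simp [PEquiv.toMatrix_apply, Prod.ext_iff, eq_comm]

end Swap

section MaxEntangled

variable (d : ℕ)

def maxEntangledVec : Fin d × Fin d → ℂ := fun p => if p.1 = p.2 then 1 else 0

theorem Phi_eq_vecMulVec : Phi d = vecMulVec (maxEntangledVec d) (maxEntangledVec d) := by
  ext p q
  simp only [Phi, maxEntangledVec, vecMulVec_apply, mul_ite, mul_one, mul_zero]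
  grind

theorem maxEntangledVec_dotProduct_self : maxEntangledVec d ⬝ᵥ maxEntangledVec d = d := by
  simp [dotProduct, maxEntangledVec, Fintype.sum_prod_type]

theorem isHermitian_Phi : (Phi d).IsHermitian := by
  ext p q
  simp [Phi, and_comm]

theorem Phi_mul_self : Phi d * Phi d = (d : ℝ) • Phi d := by
  rw [Phi_eq_vecMulVec, vecMulVec_mul_vecMulVec, maxEntangledVec_dotProduct_self]
  ext p q
  simp only [vecMulVec_apply, Pi.smul_apply, Matrix.smul_apply, smul_eq_mul, Complex.real_smul,
    Complex.ofReal_natCast]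
  ring

theorem PTb_Phi : PTb (Phi d) = swapMatrix (Fin d) := by
  ext p q
  simp only [PTb, Phi, PEquiv.toMatrix_apply, Equiv.toPEquiv_apply, Option.mem_def,
    Option.some.injEq, Equiv.prodComm_apply, Prod.ext_iff, Prod.fst_swap, Prod.snd_swap]
  grind

end MaxEntangled

section WernerHolevo

variable {d : ℕ}

/-- The optimal `V_AB = (I/(d+2) - 2Φ_d/(d(d+2)))^{T_B}`, written with the swap `S = Φ_d^{T_B}`. -/
noncomputable def optimalV (d : ℕ) : Matrix (Fin d × Fin d) (Fin d × Fin d) ℂ :=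
  ((d : ℂ) + 2)⁻¹ • 1 - (2 / ((d : ℂ) * (d + 2))) • swapMatrix (Fin d)

theorem PTb_optimalV :
    PTb (optimalV d) = ((d : ℂ) + 2)⁻¹ • 1 - (2 / ((d : ℂ) * (d + 2))) • Phi d := by
  simp [optimalV, ← PTb_Phi]

theorem trace_choi_mul_optimalV (hd : 1 < d) :
    ((((d : ℂ) - 1)⁻¹ • (1 - swapMatrix (Fin d))) * optimalV d).trace = 1 := by
  have hd₁ : (d : ℂ) - 1 ≠ 0 := sub_ne_zero.mpr (by exact_mod_cast hd.ne')
  have hprod : (1 - swapMatrix (Fin d)) * optimalV d =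
      (((d : ℂ) + 2)⁻¹ + 2 / (d * (d + 2))) • (1 - swapMatrix (Fin d)) := by
    simp only [optimalV, mul_sub, sub_mul, mul_smul_comm, one_mul, mul_one, swapMatrix_mul_self]
    module
  rw [smul_mul_assoc, hprod, trace_smul, trace_smul, trace_sub, trace_one, trace_swapMatrix]
  simp only [Fintype.card_prod, Fintype.card_fin, Nat.cast_mul, smul_eq_mul]
  field_simp

theorem posSemidef_optimalV (hd : 2 ≤ d) : (optimalV d).PosSemidef := by
  have hd₂ : (2 : ℝ) ≤ d := by exact_mod_cast hd
  have hdecomp : optimalV d =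
      (1 / (d + 2) : ℝ) • 1 + (-(2 / (d * (d + 2))) : ℝ) • swapMatrix (Fin d) := by
    rw [optimalV]
    match_scalars <;> ring
  rw [hdecomp]
  refine posSemidef_smul_one_add_smul_of_mul_self_eq_one (isHermitian_swapMatrix _)
    (swapMatrix_mul_self _) ?_
  rw [abs_neg, abs_of_nonneg (by positivity), div_le_div_iff₀ (by positivity) (by positivity)]
  nlinarith

theorem posSemidef_inv_smul_one_sub_optimalV (hd : d ≠ 0) :
    ((d : ℂ)⁻¹ • 1 - optimalV d).PosSemidef := by
  have hdecomp : (d : ℂ)⁻¹ • 1 - optimalV d =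
      (2 / (d * (d + 2)) : ℝ) • 1 + (2 / (d * (d + 2)) : ℝ) • swapMatrix (Fin d) := by
    rw [optimalV]
    match_scalars
    · field_simp
      ring
    · ring
  rw [hdecomp]
  exact posSemidef_smul_one_add_smul_of_mul_self_eq_one (isHermitian_swapMatrix _)
    (swapMatrix_mul_self _) (abs_of_nonneg (by positivity)).le

theorem posSemidef_PTb_optimalV_add (hd : d ≠ 0) :
    (PTb (optimalV d) + ((d : ℂ) + 2)⁻¹ • 1).PosSemidef := by
  have hdecomp : PTb (optimalV d) + ((d : ℂ) + 2)⁻¹ • 1 =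
      (2 / (d + 2) : ℝ) • 1 + (-(2 / (d * (d + 2))) : ℝ) • Phi d := by
    rw [PTb_optimalV]
    match_scalars <;> ring
  rw [hdecomp]
  refine posSemidef_smul_one_add_smul_of_mul_self_eq_smul (isHermitian_Phi d)
    (by positivity) (Phi_mul_self d) (by positivity) (le_of_eq ?_)
  field_simp
  ring

theorem posSemidef_sub_PTb_optimalV (hd : d ≠ 0) :
    (((d : ℂ) + 2)⁻¹ • 1 - PTb (optimalV d)).PosSemidef := by
  have hdecomp : ((d : ℂ) + 2)⁻¹ • 1 - PTb (optimalV d) =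
      (0 : ℝ) • 1 + (2 / (d * (d + 2)) : ℝ) • Phi d := by
    rw [PTb_optimalV]
    match_scalars <;> ring
  rw [hdecomp]
  exact posSemidef_smul_one_add_smul_of_mul_self_eq_smul (isHermitian_Phi d) (by positivity)
    (Phi_mul_self d) le_rfl (by positivity)

end WernerHolevo

/-- For the Werner–Holevo channel `W_d` with Choi matrix `J = (I − S)/(d−1)`,
the pair `ρ = I/d`, `V = (I/(d+2) − 2Φ_d/(d(d+2)))^{T_B}` is feasible for the
PPT-preserving fidelity SDP with `k = (d+2)/d` and achieves fidelity `1`. -/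
theorem wernerHolevo_ppt_feasible (d : ℕ) (hd : 2 ≤ d) :
    let J : Matrix (Fin d × Fin d) (Fin d × Fin d) ℂ :=
      ((d : ℂ) - 1)⁻¹ • (1 - PTb (Phi d))
    let ρ : Matrix (Fin d) (Fin d) ℂ := ((d : ℂ))⁻¹ • 1
    let V : Matrix (Fin d × Fin d) (Fin d × Fin d) ℂ :=
      PTb (((d : ℂ) + 2)⁻¹ • (1 : Matrix (Fin d × Fin d) (Fin d × Fin d) ℂ) -
        (2 / ((d : ℂ) * ((d : ℂ) + 2))) • Phi d)
    (J * V).trace = 1 ∧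
    V.PosSemidef ∧
    Loe V (ρ ⊗ₖ (1 : Matrix (Fin d) (Fin d) ℂ)) ∧
    Loe (-(((d : ℂ) / ((d : ℂ) + 2)) • (ρ ⊗ₖ (1 : Matrix (Fin d) (Fin d) ℂ)))) (PTb V) ∧
    Loe (PTb V) (((d : ℂ) / ((d : ℂ) + 2)) • (ρ ⊗ₖ (1 : Matrix (Fin d) (Fin d) ℂ))) := by
  intro J ρ V
  have hd₀ : d ≠ 0 := by omega
  have hV : V = optimalV d := by simp [V, optimalV, PTb_Phi]
  have hρ : ρ ⊗ₖ (1 : Matrix (Fin d) (Fin d) ℂ) = (d : ℂ)⁻¹ • 1 := by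
    rw [smul_kronecker, one_kronecker_one]
  have hbound : ((d : ℂ) / (d + 2)) • ((d : ℂ)⁻¹ • 1) =
      (((d : ℂ) + 2)⁻¹ • 1 : Matrix (Fin d × Fin d) (Fin d × Fin d) ℂ) := by
    rw [smul_smul]
    field_simp
  simp only [Loe, hbound, hρ, sub_neg_eq_add, J, PTb_Phi, hV]
  exact ⟨trace_choi_mul_optimalV hd, posSemidef_optimalV hd,
    posSemidef_inv_smul_one_sub_optimalV hd₀, posSemidef_PTb_optimalV_add hd₀,
    posSemidef_sub_PTb_optimalV hd₀⟩
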